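/- Let biG = (𝒩, ℰ, ℰ′) be a bilevel graph on 𝒩 = {1,…,N} with N ≥ 2, let A_1, …, A_N be maximal monotone operators on a real Hilbert space H with zer(A_1 + ⋯ + A_N) ≠ ∅, and assume there exists j ∈ {1,…,N} such that A_j is uniformly monotone on every bounded subset of its domain. Let σ > 0, θ_k ∈ [ε, 2 − ε] for some 0 < ε < 1, and let (x^k), (a^k), (w^k) be generated by the graph-based Douglas–Rachford iteration. Then for every i ∈ {1,…,N} the sequence (x_i^k) converges strongly (in norm) to a point x* with 0 ∈ (A_1 + ⋯ + A_N)x*. -/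

import Mathlib

open scoped InnerProductSpace Topology
open Filter

noncomputable section

/-- The simple (undirected) graph induced by a set of directed edges on `Fin N`. -/
def graphOf {N : ℕ} (E : Finset (Fin N × Fin N)) : SimpleGraph (Fin N) where
  Adj i j := i ≠ j ∧ ((i, j) ∈ E ∨ (j, i) ∈ E)
  symm := ⟨fun i j h => ⟨h.1.symm, h.2.symm⟩⟩
  loopless := ⟨fun i h => h.1 rfl⟩

/-- Degree of node `i` in the undirected graph induced by `E`: number of adjacent nodes. -/
def degE {N : ℕ} (E : Finset (Fin N × Fin N)) (i : Fin N) : ℕ :=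
  (Finset.univ.filter (fun j => j ≠ i ∧ ((i, j) ∈ E ∨ (j, i) ∈ E))).card

/-- The graph Laplacian of the graph induced by `E`. -/
def lapE {N : ℕ} (E : Finset (Fin N × Fin N)) : Matrix (Fin N) (Fin N) ℝ :=
  fun i j =>
    if i = j then (degE E i : ℝ)
    else if (i, j) ∈ E ∨ (j, i) ∈ E then -1 else 0

/-- The skew-symmetric matrix `Σ` built from the Laplacian of the base graph. -/
def sigmaE {N : ℕ} (E' : Finset (Fin N × Fin N)) : Matrix (Fin N) (Fin N) ℝ :=
  fun i j => if i < j then -(lapE E' i j) else if j < i then lapE E' i j else 0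

/-- The matrix `P^{ij}`. -/
def pijM (N : ℕ) (i j : Fin N) : Matrix (Fin N) (Fin N) ℝ :=
  fun h k =>
    if h = i ∧ k = i then 1
    else if h = j ∧ k = j then 1
    else if h = j ∧ k = i then -2 else 0

/-- The matrix `P = ∑_{(i,j) ∈ ℰ∖ℰ′} P^{ij}`. -/
def pE {N : ℕ} (E E' : Finset (Fin N × Fin N)) : Matrix (Fin N) (Fin N) ℝ :=
  ∑ e ∈ E \ E', pijM N e.1 e.2

/-- The block operator `Q ⊗ I : H^M → H^N` induced by a matrix `Q ∈ ℝ^{N×M}`. -/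
def matVecH {H : Type*} [NormedAddCommGroup H] [InnerProductSpace ℝ H] {N M : ℕ}
    (Q : Matrix (Fin N) (Fin M) ℝ) (x : Fin M → H) : Fin N → H :=
  fun h => ∑ k, Q h k • x k

/-- `(E, E')` forms a bilevel graph: the state graph `(𝒩, E)` is connected with a topological
ordering, and the base graph `(𝒩, E')` is a connected subgraph. -/
structure IsBilevel {N : ℕ} (E E' : Finset (Fin N × Fin N)) : Prop where
  base_subset : E' ⊆ E
  topo : ∀ e ∈ E, e.1 < e.2
  state_conn : (graphOf E).Connected
  base_conn : (graphOf E').Connected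

/-- `Z` gives an onto decomposition of the Laplacian of the base graph `E'`:
`L = Z Zᵀ` and `ker Zᵀ = span{(1,…,1)}`. -/
def ZOnto {N : ℕ} (E' : Finset (Fin N × Fin N)) (Z : Matrix (Fin N) (Fin (N - 1)) ℝ) : Prop :=
  Z * Z.transpose = lapE E' ∧
  ∀ v : Fin N → ℝ, Z.transpose.mulVec v = 0 ↔ ∃ c : ℝ, v = fun _ => c

/-- The graph-based Douglas–Rachford iteration: `a_i^{k+1} ∈ A_i x_i^{k+1}`,
`(L⊗I)x^{k+1} + ((Σ+P)⊗I)x^{k+1} + σ a^{k+1} = (Z⊗I)w^k` and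
`w^{k+1} = w^k − θ_k (Zᵀ⊗I)x^{k+1}`. -/
structure IsGDR {H : Type*} [NormedAddCommGroup H] [InnerProductSpace ℝ H] {N : ℕ}
    (E E' : Finset (Fin N × Fin N)) (Z : Matrix (Fin N) (Fin (N - 1)) ℝ)
    (A : Fin N → H → Set H) (σ : ℝ) (θ : ℕ → ℝ)
    (x : ℕ → Fin N → H) (a : ℕ → Fin N → H) (w : ℕ → Fin (N - 1) → H) : Prop where
  mem : ∀ k i, a (k + 1) i ∈ A i (x (k + 1) i)
  res : ∀ k, matVecH (lapE E' + sigmaE E' + pE E E') (x (k + 1)) + σ • a (k + 1)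
          = matVecH Z (w k)
  upd : ∀ k, w (k + 1) = w k - θ k • matVecH Z.transpose (x (k + 1))

/-- A set-valued operator on a real inner product space is monotone. -/
def IsMonotoneOp {K : Type*} [NormedAddCommGroup K] [InnerProductSpace ℝ K]
    (A : K → Set K) : Prop :=
  ∀ x y u v : K, u ∈ A x → v ∈ A y → 0 ≤ ⟪u - v, x - y⟫_ℝ

/-- A set-valued operator is maximal monotone. -/
def IsMaxMonotone {K : Type*} [NormedAddCommGroup K] [InnerProductSpace ℝ K]
    (A : K → Set K) : Prop :=
  IsMonotoneOp A ∧ ∀ x u : K, (∀ y v : K, v ∈ A y → 0 ≤ ⟪u - v, x - y⟫_ℝ) → u ∈ A x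

/-- `zer (A_1 + ⋯ + A_N) ≠ ∅`. -/
def SumZerNonempty {H : Type*} [NormedAddCommGroup H] [InnerProductSpace ℝ H] {N : ℕ}
    (A : Fin N → H → Set H) : Prop :=
  ∃ (xs : H) (b : Fin N → H), (∀ i, b i ∈ A i xs) ∧ ∑ i, b i = 0

/-- Weak convergence of a sequence in an inner product space. -/
def WeakLim {K : Type*} [NormedAddCommGroup K] [InnerProductSpace ℝ K]
    (u : ℕ → K) (l : K) : Prop :=
  ∀ h : K, Tendsto (fun k => ⟪u k, h⟫_ℝ) atTop (𝓝 ⟪l, h⟫_ℝ)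

/-- The state variance `Var(x) = (1/N) ∑_i ‖x_i − x̄‖²`. -/
def stateVar {H : Type*} [NormedAddCommGroup H] [InnerProductSpace ℝ H] {N : ℕ}
    (x : Fin N → H) : ℝ :=
  (N : ℝ)⁻¹ * ∑ i, ‖x i - (N : ℝ)⁻¹ • ∑ j, x j‖ ^ 2

/-- In-degree `d_i⁺ = #{h : (h,i) ∈ E}` of node `i`. -/
def inDeg {N : ℕ} (E : Finset (Fin N × Fin N)) (i : Fin N) : ℕ :=
  (Finset.univ.filter (fun h => (h, i) ∈ E)).card

/-- Out-degree `d_i⁻ = #{h : (i,h) ∈ E}` of node `i`. -/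
def outDeg {N : ℕ} (E : Finset (Fin N × Fin N)) (i : Fin N) : ℕ :=
  (Finset.univ.filter (fun h => (i, h) ∈ E)).card

/-- The unbalance `U_G = sqrt((1/N) ∑_i (d_i⁻ − d_i⁺)²)` of the state graph. -/
def unbalance {N : ℕ} (E : Finset (Fin N × Fin N)) : ℝ :=
  Real.sqrt ((N : ℝ)⁻¹ * ∑ i, ((outDeg E i : ℝ) - (inDeg E i : ℝ)) ^ 2)

end

noncomputable section

/-- `A` is uniformly monotone on `S`: there is an increasing function
`φ : [0,∞) → [0,+∞]` vanishing only at `0` with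
`⟨a − a′, x − x′⟩ ≥ φ(‖x − x′‖)` for all `x, x′ ∈ S`, `a ∈ A x`, `a′ ∈ A x′`. -/
def UnifMonoOn {H : Type*} [NormedAddCommGroup H] [InnerProductSpace ℝ H]
    (A : H → Set H) (S : Set H) : Prop :=
  ∃ φ : ℝ → EReal,
    (∀ s t : ℝ, 0 ≤ s → s ≤ t → φ s ≤ φ t) ∧
    (∀ t : ℝ, 0 ≤ t → 0 ≤ φ t) ∧
    (∀ t : ℝ, 0 ≤ t → (φ t = 0 ↔ t = 0)) ∧
    (∀ x x' u u' : H, x ∈ S → x' ∈ S → u ∈ A x → u' ∈ A x' →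
      φ ‖x - x'‖ ≤ ((⟪u - u', x - x'⟫_ℝ : ℝ) : EReal))

end

/-!
Take a solution `(x̄, b)` (`bᵢ ∈ Aᵢ x̄`, `∑ bᵢ = 0`) and `w̄` with `Z w̄ = M (x̄, …, x̄) + σ b`,
where `M = L + Σ + P`. The quadratic form of `M` is `‖Zᵀd‖² + ∑_{(i,j) ∈ ℰ∖ℰ′} ‖dᵢ - dⱼ‖²`, so
monotonicity of the `Aᵢ` yields the Fejér inequality
`‖w^{k+1} - w̄‖² + ε²‖Zᵀx^{k+1}‖² + 2εσ ∑ᵢ ⟪aᵢ^{k+1} - bᵢ, xᵢ^{k+1} - x̄⟫ ≤ ‖w^k - w̄‖²`.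
Hence `Zᵀx^k → 0`, which forces consensus because `ker Zᵀ` is the constants, and the duality gap
tends to `0`. As `M` is lower triangular with positive diagonal, forward substitution bounds
`x^k`, and uniform monotonicity of `A_j` on this bounded set turns the vanishing gap into
`x_j^k → x̄`.
-/

open Asymptotics
open scoped Matrix

section Sequences

variable {E : Type*} [NormedAddCommGroup E] {M : ℕ}

lemma norm_le_sqrt_sum_norm_sq (v : Fin M → E) (m : Fin M) : ‖v m‖ ≤ √(∑ m, ‖v m‖ ^ 2) := by
  simpa using Real.abs_le_sqrt
    (Finset.single_le_sum (f := fun m => ‖v m‖ ^ 2) (fun _ _ => sq_nonneg _) (Finset.mem_univ m))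

lemma tendsto_zero_of_sum_norm_sq {ι : Type*} {l : Filter ι} {q : ι → Fin M → E}
    (h : Tendsto (fun t => ∑ m, ‖q t m‖ ^ 2) l (𝓝 0)) (m : Fin M) :
    Tendsto (fun t => q t m) l (𝓝 0) := by
  rw [tendsto_zero_iff_norm_tendsto_zero]
  exact squeeze_zero (fun _ => norm_nonneg _) (fun t => norm_le_sqrt_sum_norm_sq (q t) m)
    (by simpa using h.sqrt)

end Sequences

lemma tendsto_zero_of_fejer {s u v : ℕ → ℝ} {α β : ℝ} (hα : 0 < α) (hβ : 0 < β)
    (hs : ∀ k, 0 ≤ s k) (hu : ∀ k, 0 ≤ u k) (hv : ∀ k, 0 ≤ v k)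
    (h : ∀ k, s (k + 1) + α * u k + β * v k ≤ s k) :
    Tendsto u atTop (𝓝 0) ∧ Tendsto v atTop (𝓝 0) ∧ Antitone s := by
  have htel : ∀ n, α * ∑ k ∈ Finset.range n, u k + β * ∑ k ∈ Finset.range n, v k + s n ≤ s 0 := by
    intro n
    induction n with
    | zero => simp
    | succ n ih =>
      simp only [Finset.sum_range_succ]
      linarith [h n]
  have hsum_u : ∀ n, ∑ k ∈ Finset.range n, u k ≤ s 0 / α := fun n => by
    rw [le_div_iff₀ hα]
    nlinarith [htel n, hs n, Finset.sum_nonneg fun k (_ : k ∈ Finset.range n) => hv k]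
  have hsum_v : ∀ n, ∑ k ∈ Finset.range n, v k ≤ s 0 / β := fun n => by
    rw [le_div_iff₀ hβ]
    nlinarith [htel n, hs n, Finset.sum_nonneg fun k (_ : k ∈ Finset.range n) => hu k]
  exact ⟨(summable_of_sum_range_le hu hsum_u).tendsto_atTop_zero,
    (summable_of_sum_range_le hv hsum_v).tendsto_atTop_zero,
    antitone_nat_of_succ_le fun k => by nlinarith [h k, hu k, hv k]⟩

section BlockOperators

variable {H : Type*} [NormedAddCommGroup H] [InnerProductSpace ℝ H] {N M : ℕ}

lemma matVecH_add (Q R : Matrix (Fin N) (Fin M) ℝ) (u : Fin M → H) :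
    matVecH (Q + R) u = matVecH Q u + matVecH R u := by
  funext i
  simp [matVecH, add_smul, Finset.sum_add_distrib]

lemma matVecH_sum {ι : Type*} (s : Finset ι) (Q : ι → Matrix (Fin N) (Fin M) ℝ)
    (u : Fin M → H) : matVecH (∑ e ∈ s, Q e) u = ∑ e ∈ s, matVecH (Q e) u := by
  funext i
  simp only [matVecH, Matrix.sum_apply, Finset.sum_smul, Finset.sum_apply]
  exact Finset.sum_comm

lemma matVecH_sub (Q : Matrix (Fin N) (Fin M) ℝ) (u v : Fin M → H) :
    matVecH Q (u - v) = matVecH Q u - matVecH Q v := by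
  funext i
  simp [matVecH, smul_sub, Finset.sum_sub_distrib]

lemma matVecH_mul {K : ℕ} (Q : Matrix (Fin N) (Fin M) ℝ) (R : Matrix (Fin M) (Fin K) ℝ)
    (u : Fin K → H) : matVecH (Q * R) u = matVecH Q (matVecH R u) := by
  funext i
  simp only [matVecH, Matrix.mul_apply, Finset.sum_smul, Finset.smul_sum, smul_smul]
  exact Finset.sum_comm

lemma matVecH_smul_const (Q : Matrix (Fin N) (Fin M) ℝ) (c : Fin M → ℝ) (y : H) :
    matVecH Q (fun m => c m • y) = fun i => (Q *ᵥ c) i • y := by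
  funext i
  simp [matVecH, Matrix.mulVec, dotProduct, Finset.sum_smul, smul_smul]

lemma sum_matVecH_const (Q : Matrix (Fin N) (Fin M) ℝ) (y : H) :
    ∑ i, matVecH Q (fun _ => y) i = (∑ i, ∑ k, Q i k) • y := by
  simp [matVecH, Finset.sum_smul]

lemma sum_smul_matVecH_transpose (Q : Matrix (Fin N) (Fin M) ℝ) (c : Fin M → ℝ)
    (u : Fin N → H) : ∑ m, c m • matVecH Qᵀ u m = ∑ i, (Q *ᵥ c) i • u i := by
  simp only [matVecH, Matrix.transpose_apply, Finset.smul_sum, smul_smul, Matrix.mulVec,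
    dotProduct, Finset.sum_smul]
  rw [Finset.sum_comm]
  simp only [mul_comm]

lemma sum_inner_matVecH_transpose (Q : Matrix (Fin N) (Fin M) ℝ) (u : Fin N → H)
    (v : Fin M → H) : ∑ m, ⟪matVecH Qᵀ u m, v m⟫_ℝ = ∑ i, ⟪u i, matVecH Q v i⟫_ℝ := by
  simp only [matVecH, sum_inner, inner_sum, real_inner_smul_left, real_inner_smul_right,
    Matrix.transpose_apply]
  exact Finset.sum_comm

lemma sum_inner_matVecH (Q : Matrix (Fin N) (Fin M) ℝ) (u : Fin N → H) (v : Fin M → H) :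
    ∑ i, ⟪u i, matVecH Q v i⟫_ℝ = ∑ i, ∑ k, Q i k * ⟪u i, v k⟫_ℝ := by
  simp [matVecH, inner_sum, real_inner_smul_right]

lemma sum_inner_matVecH_self_of_skew {Q : Matrix (Fin N) (Fin N) ℝ}
    (hQ : ∀ i k, Q k i = -Q i k) (u : Fin N → H) : ∑ i, ⟪u i, matVecH Q u i⟫_ℝ = 0 := by
  rw [sum_inner_matVecH]
  have h : ∑ i, ∑ k, Q i k * ⟪u i, u k⟫_ℝ = -∑ i, ∑ k, Q i k * ⟪u i, u k⟫_ℝ :=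
    calc ∑ i, ∑ k, Q i k * ⟪u i, u k⟫_ℝ = ∑ k, ∑ i, Q i k * ⟪u i, u k⟫_ℝ := Finset.sum_comm
      _ = ∑ k, ∑ i, -(Q k i * ⟪u k, u i⟫_ℝ) := by
        refine Finset.sum_congr rfl fun k _ => Finset.sum_congr rfl fun i _ => ?_
        rw [hQ, real_inner_comm]
        ring
      _ = _ := by simp only [Finset.sum_neg_distrib]
  linarith

lemma sum_norm_sub_smul_sq (v q : Fin M → H) (t : ℝ) :
    ∑ m, ‖v m - t • q m‖ ^ 2
      = ∑ m, ‖v m‖ ^ 2 - 2 * t * ∑ m, ⟪q m, v m⟫_ℝ + t ^ 2 * ∑ m, ‖q m‖ ^ 2 := by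
  simp only [norm_sub_sq_real, real_inner_smul_right, norm_smul, Real.norm_eq_abs, mul_pow,
    sq_abs, Finset.sum_add_distrib, Finset.sum_sub_distrib, Finset.mul_sum, real_inner_comm]
  congr 1
  congr 1
  refine Finset.sum_congr rfl fun m _ => ?_
  ring

end BlockOperators

section GraphMatrices

variable {N : ℕ}

lemma lapE_comm (E : Finset (Fin N × Fin N)) (i k : Fin N) : lapE E i k = lapE E k i := by
  unfold lapE
  rcases eq_or_ne i k with rfl | hne
  · rfl
  · rw [if_neg hne, if_neg hne.symm]
    exact if_congr or_comm rfl rfl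

lemma sigmaE_apply_swap (E' : Finset (Fin N × Fin N)) (i k : Fin N) :
    sigmaE E' k i = -sigmaE E' i k := by
  unfold sigmaE
  rcases lt_trichotomy i k with hlt | rfl | hgt
  · simp [hlt, not_lt.mpr hlt.le, lapE_comm E' k i]
  · simp
  · simp [hgt, not_lt.mpr hgt.le, lapE_comm E' k i]

lemma pijM_apply_of_lt {a b i k : Fin N} (hab : a ≤ b) (hik : i < k) : pijM N a b i k = 0 := by
  unfold pijM
  split_ifs <;> first | rfl | omega

lemma pijM_diag_nonneg (a b i : Fin N) : 0 ≤ pijM N a b i i := by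
  unfold pijM
  split_ifs <;> first | (exfalso; tauto) | norm_num

variable {H : Type*} [NormedAddCommGroup H] [InnerProductSpace ℝ H]

lemma sum_inner_matVecH_pijM_self {a b : Fin N} (hab : a ≠ b) (u : Fin N → H) :
    ∑ i, ⟪u i, matVecH (pijM N a b) u i⟫_ℝ = ‖u a - u b‖ ^ 2 := by
  have hP : pijM N a b = fun i k => (if i = a ∧ k = a then (1 : ℝ) else 0)
      + (if i = b ∧ k = b then 1 else 0) + (if i = b ∧ k = a then -2 else 0) := by
    funext i k
    unfold pijM
    by_cases h₁ : i = a <;> by_cases h₂ : i = b <;> by_cases h₃ : k = a <;> by_cases h₄ : k = b <;>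
      simp_all
  rw [sum_inner_matVecH, norm_sub_sq_real, hP]
  simp [add_mul, ite_mul, Finset.sum_add_distrib, ite_and, real_inner_comm (u a)]
  ring

/-- The matrix `M` of the implicit step `M x^{k+1} + σ a^{k+1} = Z w^k`. -/
def gdrMatrix (E E' : Finset (Fin N × Fin N)) : Matrix (Fin N) (Fin N) ℝ :=
  lapE E' + sigmaE E' + pE E E'

variable {E E' : Finset (Fin N × Fin N)}

lemma gdrMatrix_apply_of_lt (htopo : ∀ e ∈ E, e.1 < e.2) {i k : Fin N} (hik : i < k) :
    gdrMatrix E E' i k = 0 := by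
  have hP : pE E E' i k = 0 := by
    rw [pE, Matrix.sum_apply]
    exact Finset.sum_eq_zero fun e he =>
      pijM_apply_of_lt (htopo e (Finset.mem_sdiff.mp he).1).le hik
  simp [gdrMatrix, sigmaE, hik, hP]

lemma one_le_degE (hN : 2 ≤ N) (hconn : (graphOf E).Connected) (i : Fin N) : 1 ≤ degE E i := by
  classical
  have : Nontrivial (Fin N) := Fin.nontrivial_iff_two_le.mpr hN
  obtain ⟨k, hik, hE⟩ := ((graphOf E).degree_pos_iff_exists_adj i).mp
    (hconn.preconnected.degree_pos_of_nontrivial i)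
  exact Finset.card_pos.mpr ⟨k, by simp [hik.symm, hE]⟩

lemma gdrMatrix_diag_pos (hN : 2 ≤ N) (hconn : (graphOf E').Connected) (i : Fin N) :
    0 < gdrMatrix E E' i i := by
  have hP : 0 ≤ pE E E' i i := by
    rw [pE, Matrix.sum_apply]
    exact Finset.sum_nonneg fun e _ => pijM_diag_nonneg e.1 e.2 i
  have hdeg : (1 : ℝ) ≤ degE E' i := by exact_mod_cast one_le_degE hN hconn i
  simp only [gdrMatrix, Matrix.add_apply, lapE, sigmaE, if_true, lt_irrefl, if_false]
  linarith

lemma sum_inner_gdrMatrix_self {K : ℕ} {Z : Matrix (Fin N) (Fin K) ℝ} (hL : Z * Zᵀ = lapE E')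
    (htopo : ∀ e ∈ E, e.1 < e.2) (d : Fin N → H) :
    ∑ i, ⟪d i, matVecH (gdrMatrix E E') d i⟫_ℝ
      = ∑ m, ‖matVecH Zᵀ d m‖ ^ 2 + ∑ e ∈ E \ E', ‖d e.1 - d e.2‖ ^ 2 := by
  have hL' : ∑ i, ⟪d i, matVecH (lapE E') d i⟫_ℝ = ∑ m, ‖matVecH Zᵀ d m‖ ^ 2 := by
    simp only [← hL, matVecH_mul, ← sum_inner_matVecH_transpose, real_inner_self_eq_norm_sq]
  have hS := sum_inner_matVecH_self_of_skew (sigmaE_apply_swap E') d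
  have hP : ∑ i, ⟪d i, matVecH (pE E E') d i⟫_ℝ = ∑ e ∈ E \ E', ‖d e.1 - d e.2‖ ^ 2 := by
    rw [pE, matVecH_sum]
    simp only [Finset.sum_apply, inner_sum]
    rw [Finset.sum_comm]
    exact Finset.sum_congr rfl fun e he =>
      sum_inner_matVecH_pijM_self (htopo e (Finset.mem_sdiff.mp he).1).ne d
  simp only [gdrMatrix, matVecH_add, Pi.add_apply, inner_add_right, Finset.sum_add_distrib, hL',
    hS, hP, add_zero]

end GraphMatrices

namespace ZOnto

variable {H : Type*} [NormedAddCommGroup H] [InnerProductSpace ℝ H] {N : ℕ}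
  {E E' : Finset (Fin N × Fin N)} {Z : Matrix (Fin N) (Fin (N - 1)) ℝ}

/-- `range Z = (ker Zᵀ)ᗮ` is the hyperplane of vectors with zero sum. -/
lemma exists_mulVec_eq (hZ : ZOnto E' Z) {u : Fin N → ℝ} (hu : ∑ i, u i = 0) :
    ∃ c, Z *ᵥ c = u := by
  have hker : WithLp.toLp 2 u ∈ (Matrix.toEuclideanLin Zᵀ).kerᗮ := by
    rw [Submodule.mem_orthogonal]
    intro v hv
    obtain ⟨c, hc⟩ := (hZ.2 v.ofLp).mp (congrArg WithLp.ofLp hv)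
    simp [PiLp.inner_apply, hc, ← Finset.sum_mul, hu]
  rw [LinearMap.orthogonal_ker, ← Matrix.toEuclideanLin_conjTranspose_eq_adjoint] at hker
  obtain ⟨c, hc⟩ := hker
  exact ⟨c.ofLp, congrArg WithLp.ofLp hc⟩

lemma exists_matVecH_eq (hZ : ZOnto E' Z) {v : Fin N → H} (hv : ∑ i, v i = 0) :
    ∃ w, matVecH Z w = v := by
  rcases Nat.eq_zero_or_pos N with rfl | hN
  · exact ⟨0, Subsingleton.elim _ _⟩
  have hc : ∀ i : Fin N, ∃ c, Z *ᵥ c = Pi.single i 1 - Pi.single ⟨0, hN⟩ 1 :=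
    fun i => hZ.exists_mulVec_eq (by simp)
  choose c hc using hc
  refine ⟨fun m => ∑ i, c i m • v i, funext fun h => ?_⟩
  simp only [matVecH, Finset.smul_sum, smul_smul]
  rw [Finset.sum_comm]
  simp only [← Finset.sum_smul]
  change ∑ i, (Z *ᵥ c i) h • v i = v h
  simp [hc, sub_smul, Finset.sum_sub_distrib, Pi.single_apply, hv]

lemma matVecH_transpose_const (hZ : ZOnto E' Z) (y : H) : matVecH Zᵀ (fun _ => y) = 0 := by
  have h1 : Zᵀ *ᵥ (fun _ => (1 : ℝ)) = 0 := (hZ.2 _).mpr ⟨1, rfl⟩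
  funext m
  simpa [h1] using congrFun (matVecH_smul_const Zᵀ (fun _ => (1 : ℝ)) y) m

/-- Evaluate the quadratic form of `sum_inner_gdrMatrix_self` at the constant vector `1 ∈ ℝᴺ`. -/
lemma sum_gdrMatrix_entries (hZ : ZOnto E' Z) (htopo : ∀ e ∈ E, e.1 < e.2) :
    ∑ i, ∑ k, gdrMatrix E E' i k = 0 := by
  have h := sum_inner_gdrMatrix_self hZ.1 htopo (fun _ => (1 : ℝ))
  rw [hZ.matVecH_transpose_const] at h
  simpa [matVecH] using h

lemma tendsto_sub_of_tendsto_transpose (hZ : ZOnto E' Z) {ι : Type*} {l : Filter ι}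
    {u : ι → Fin N → H} (h : ∀ m, Tendsto (fun t => matVecH Zᵀ (u t) m) l (𝓝 0)) (i j : Fin N) :
    Tendsto (fun t => u t i - u t j) l (𝓝 0) := by
  obtain ⟨c, hc⟩ := hZ.exists_mulVec_eq (u := Pi.single i 1 - Pi.single j 1) (by simp)
  have hrepr : ∀ t, u t i - u t j = ∑ m, c m • matVecH Zᵀ (u t) m := fun t => by
    simp [sum_smul_matVecH_transpose, hc, sub_smul, Finset.sum_sub_distrib, Pi.single_apply]
  simp only [hrepr]
  simpa using tendsto_finsetSum Finset.univ fun m _ => (h m).const_smul (c m)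

end ZOnto

lemma exists_gdr_fixedPoint {H : Type*} [NormedAddCommGroup H] [InnerProductSpace ℝ H] {N : ℕ}
    {E E' : Finset (Fin N × Fin N)} {Z : Matrix (Fin N) (Fin (N - 1)) ℝ} (hZ : ZOnto E' Z)
    (htopo : ∀ e ∈ E, e.1 < e.2) (σ : ℝ) (xb : H) {b : Fin N → H} (hb : ∑ i, b i = 0) :
    ∃ wb, matVecH Z wb = matVecH (gdrMatrix E E') (fun _ => xb) + σ • b :=
  hZ.exists_matVecH_eq <| by
    simp [Finset.sum_add_distrib, sum_matVecH_const, hZ.sum_gdrMatrix_entries htopo,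
      ← Finset.smul_sum, hb]

section MonotoneOperators

variable {H : Type*} [NormedAddCommGroup H] [InnerProductSpace ℝ H]

lemma mul_norm_le_norm_smul_add {μ : ℝ} {d g : H} (hg : 0 ≤ ⟪g, d⟫_ℝ) :
    μ * ‖d‖ ≤ ‖μ • d + g‖ := by
  have hlow : μ * ‖d‖ * ‖d‖ ≤ ⟪μ • d + g, d⟫_ℝ := by
    rw [inner_add_left, real_inner_smul_left, real_inner_self_eq_norm_sq]
    nlinarith
  rcases (norm_nonneg d).eq_or_lt with hd | hd
  · rw [← hd, mul_zero]
    exact norm_nonneg _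
  · exact le_of_mul_le_mul_right (hlow.trans (real_inner_le_norm _ _)) hd

lemma isBigO_of_lowerTriangular {N : ℕ} {M : Matrix (Fin N) (Fin N) ℝ}
    (hM : ∀ i k, i < k → M i k = 0) (hdiag : ∀ i, 0 < M i i) {ι : Type*} {l : Filter ι}
    {d g : ι → Fin N → H} {r : ι → ℝ} (hg : ∀ t i, 0 ≤ ⟪g t i, d t i⟫_ℝ)
    (hr : ∀ i, (fun t => matVecH M (d t) i + g t i) =O[l] r) (i : Fin N) :
    (fun t => d t i) =O[l] r := by
  induction i using WellFoundedLT.induction with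
  | _ i ih =>
  have hsplit : ∀ t, M i i • d t i + g t i
      = (matVecH M (d t) i + g t i) - ∑ k ∈ Finset.univ.erase i, M i k • d t k := fun t => by
    rw [matVecH, ← Finset.add_sum_erase _ _ (Finset.mem_univ i)]
    abel
  have hrest : (fun t => ∑ k ∈ Finset.univ.erase i, M i k • d t k) =O[l] r := by
    refine IsBigO.fun_sum fun k hk => ?_
    rcases lt_or_gt_of_ne (Finset.ne_of_mem_erase hk) with hki | hik
    · exact (ih k hki).const_smul_left (M i k)
    · simpa [hM i k hik] using isBigO_zero r l
  have hdiag_bound : (fun t => d t i) =O[l] (fun t => M i i • d t i + g t i) :=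
    IsBigO.of_bound (M i i)⁻¹ (Filter.Eventually.of_forall fun t => by
      rw [inv_mul_eq_div, le_div_iff₀ (hdiag i), mul_comm]
      exact mul_norm_le_norm_smul_add (hg t i))
  exact hdiag_bound.trans (by simpa only [hsplit] using (hr i).sub hrest)

lemma tendsto_of_unifMonoOn {A : H → Set H} {S : Set H} (hA : UnifMonoOn A S) {ι : Type*}
    {l : Filter ι} {u v : ι → H} {y c : H} (hu : ∀ t, u t ∈ S) (hy : y ∈ S)
    (hv : ∀ t, v t ∈ A (u t)) (hc : c ∈ A y)
    (h : Tendsto (fun t => ⟪v t - c, u t - y⟫_ℝ) l (𝓝 0)) : Tendsto u l (𝓝 y) := by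
  obtain ⟨φ, hφmono, hφnonneg, hφzero, hφ⟩ := hA
  rw [Metric.tendsto_nhds]
  intro δ hδ
  have hφδ : 0 < φ δ := (hφnonneg δ hδ.le).lt_of_ne fun h => hδ.ne' ((hφzero δ hδ.le).mp h.symm)
  obtain ⟨r, hr0, hrδ⟩ := EReal.lt_iff_exists_real_btwn.mp hφδ
  filter_upwards [h.eventually (gt_mem_nhds (EReal.coe_pos.mp hr0))] with t ht
  by_contra! hδt
  rw [dist_eq_norm] at hδt
  have := (hφmono δ _ hδ.le hδt).trans (hφ _ _ _ _ (hu t) hy (hv t) hc)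
  exact (this.trans_lt ((EReal.coe_lt_coe_iff.mpr ht).trans hrδ)).false

lemma tendsto_of_unifMonoOn_bounded {A : H → Set H}
    (hA : ∀ S : Set H, S ⊆ {z : H | (A z).Nonempty} → Bornology.IsBounded S → UnifMonoOn A S)
    {ι : Type*} {l : Filter ι} {u v : ι → H} {y c : H} (hv : ∀ t, v t ∈ A (u t)) (hc : c ∈ A y)
    (hbdd : u =O[⊤] (fun _ => (1 : ℝ)))
    (h : Tendsto (fun t => ⟪v t - c, u t - y⟫_ℝ) l (𝓝 0)) : Tendsto u l (𝓝 y) := by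
  have hdom : insert y (Set.range u) ⊆ {z : H | (A z).Nonempty} := by
    rintro z (rfl | ⟨t, rfl⟩)
    exacts [⟨c, hc⟩, ⟨v t, hv t⟩]
  have hS : Bornology.IsBounded (insert y (Set.range u)) := by
    obtain ⟨C, hC⟩ := isBigO_top.mp hbdd
    refine (isBounded_iff_forall_norm_le.mpr ⟨C, ?_⟩).insert y
    rintro _ ⟨t, rfl⟩
    simpa using hC t
  exact tendsto_of_unifMonoOn (hA _ hdom hS) (fun t => .inr ⟨t, rfl⟩) (.inl rfl) hv hc h

end MonotoneOperators

namespace IsGDR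

variable {H : Type*} [NormedAddCommGroup H] [InnerProductSpace ℝ H] {N : ℕ}
  {E E' : Finset (Fin N × Fin N)} {Z : Matrix (Fin N) (Fin (N - 1)) ℝ} {A : Fin N → H → Set H}
  {σ : ℝ} {θ : ℕ → ℝ} {x a : ℕ → Fin N → H} {w : ℕ → Fin (N - 1) → H} {xb : H}
  {b : Fin N → H} {wb : Fin (N - 1) → H}

lemma matVecH_sub_fixedPoint (hiter : IsGDR E E' Z A σ θ x a w)
    (hwb : matVecH Z wb = matVecH (gdrMatrix E E') (fun _ => xb) + σ • b) (k : ℕ) :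
    matVecH Z (w k - wb)
      = matVecH (gdrMatrix E E') (x (k + 1) - fun _ => xb) + σ • (a (k + 1) - b) := by
  rw [matVecH_sub, matVecH_sub, hwb, ← hiter.res k, gdrMatrix, smul_sub]
  abel

lemma sum_norm_sq_add_le (hiter : IsGDR E E' Z A σ θ x a w) (hZ : ZOnto E' Z)
    (htopo : ∀ e ∈ E, e.1 < e.2)
    (hwb : matVecH Z wb = matVecH (gdrMatrix E E') (fun _ => xb) + σ • b) (k : ℕ) :
    ∑ m, ‖matVecH Zᵀ (x (k + 1)) m‖ ^ 2 + σ * ∑ i, ⟪a (k + 1) i - b i, x (k + 1) i - xb⟫_ℝ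
      ≤ ∑ m, ⟪matVecH Zᵀ (x (k + 1)) m, w k m - wb m⟫_ℝ := by
  obtain ⟨d, hd⟩ : ∃ d : Fin N → H, d = x (k + 1) - fun _ => xb := ⟨_, rfl⟩
  have hdi : ∀ i, d i = x (k + 1) i - xb := by simp [hd]
  have hq : matVecH Zᵀ (x (k + 1)) = matVecH Zᵀ d := by
    rw [hd, matVecH_sub, hZ.matVecH_transpose_const, sub_zero]
  have hres : matVecH Z (w k - wb) = matVecH (gdrMatrix E E') d + σ • (a (k + 1) - b) :=
    hd ▸ hiter.matVecH_sub_fixedPoint hwb k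
  have hP : 0 ≤ ∑ e ∈ E \ E', ‖d e.1 - d e.2‖ ^ 2 := Finset.sum_nonneg fun _ _ => sq_nonneg _
  calc _ = ∑ m, ‖matVecH Zᵀ d m‖ ^ 2 + σ * ∑ i, ⟪a (k + 1) i - b i, d i⟫_ℝ := by
        simp only [hq, hdi]
    _ ≤ ∑ i, ⟪d i, matVecH (gdrMatrix E E') d i⟫_ℝ + σ * ∑ i, ⟪a (k + 1) i - b i, d i⟫_ℝ := by
        rw [sum_inner_gdrMatrix_self hZ.1 htopo d]
        linarith
    _ = ∑ i, ⟪d i, matVecH Z (w k - wb) i⟫_ℝ := by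
        simp only [hres, Pi.add_apply, Pi.smul_apply, Pi.sub_apply, inner_add_right,
          real_inner_smul_right, Finset.sum_add_distrib, Finset.mul_sum, real_inner_comm (d _)]
    _ = _ := by
        rw [← sum_inner_matVecH_transpose, ← hq]
        rfl

lemma fejer (hiter : IsGDR E E' Z A σ θ x a w) (hZ : ZOnto E' Z) (htopo : ∀ e ∈ E, e.1 < e.2)
    (hwb : matVecH Z wb = matVecH (gdrMatrix E E') (fun _ => xb) + σ • b) {k : ℕ}
    (hmono : ∀ i, 0 ≤ ⟪a (k + 1) i - b i, x (k + 1) i - xb⟫_ℝ) (hσ : 0 ≤ σ) {ε : ℝ}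
    (hε : 0 ≤ ε) (hθ : θ k ∈ Set.Icc ε (2 - ε)) :
    ∑ m, ‖w (k + 1) m - wb m‖ ^ 2 + ε ^ 2 * ∑ m, ‖matVecH Zᵀ (x (k + 1)) m‖ ^ 2
      + 2 * ε * σ * ∑ i, ⟪a (k + 1) i - b i, x (k + 1) i - xb⟫_ℝ
      ≤ ∑ m, ‖w k m - wb m‖ ^ 2 := by
  have hstep : ∀ m, w (k + 1) m - wb m = (w k m - wb m) - θ k • matVecH Zᵀ (x (k + 1)) m :=
    fun m => by
      rw [hiter.upd k]
      simp only [Pi.sub_apply, Pi.smul_apply]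
      abel
  have hkey := hiter.sum_norm_sq_add_le hZ htopo hwb k
  simp only [hstep, sum_norm_sub_smul_sq]
  have hQ : 0 ≤ ∑ m, ‖matVecH Zᵀ (x (k + 1)) m‖ ^ 2 := Finset.sum_nonneg fun _ _ => sq_nonneg _
  have hD := Finset.sum_nonneg fun i (_ : i ∈ Finset.univ) => hmono i
  obtain ⟨hθ₁, hθ₂⟩ := hθ
  -- `θ (2 - θ) ≥ ε²` on `[ε, 2 - ε]`, because this interval being nonempty forces `ε ≤ 1`
  nlinarith [mul_nonneg (mul_nonneg (sub_nonneg.mpr hθ₁) (sub_nonneg.mpr hθ₂)) hQ,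
    mul_nonneg (mul_nonneg hε (by linarith : (0 : ℝ) ≤ 1 - ε)) hQ,
    mul_nonneg (mul_nonneg hσ hD) (sub_nonneg.mpr hθ₁),
    mul_le_mul_of_nonneg_left hkey (by linarith : (0 : ℝ) ≤ θ k)]

lemma x_isBigO_one (hiter : IsGDR E E' Z A σ θ x a w) (hN : 2 ≤ N) (hbi : IsBilevel E E')
    (hwb : matVecH Z wb = matVecH (gdrMatrix E E') (fun _ => xb) + σ • b)
    (hmono : ∀ k i, 0 ≤ ⟪a (k + 1) i - b i, x (k + 1) i - xb⟫_ℝ) (hσ : 0 ≤ σ)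
    (hw : ∀ m, (fun k => w k m - wb m) =O[⊤] (fun _ => (1 : ℝ))) (i : Fin N) :
    (fun k => x (k + 1) i) =O[⊤] (fun _ => (1 : ℝ)) := by
  have hd := isBigO_of_lowerTriangular (fun _ _ => gdrMatrix_apply_of_lt hbi.topo)
    (gdrMatrix_diag_pos hN hbi.base_conn) (d := fun k => x (k + 1) - fun _ => xb)
    (g := fun k => σ • (a (k + 1) - b))
    (fun k i => by simpa [real_inner_smul_left] using mul_nonneg hσ (hmono k i))
    (fun i => (IsBigO.fun_sum (s := Finset.univ) fun m _ =>
      (hw m).const_smul_left (Z i m)).congr_left fun k => by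
        simp only [Pi.smul_apply]
        exact congrFun (hiter.matVecH_sub_fixedPoint hwb k) i) i
  simpa using hd.add (isBigO_const_const xb one_ne_zero ⊤)

lemma tendsto_zero_and_bounded (hiter : IsGDR E E' Z A σ θ x a w) (hZ : ZOnto E' Z)
    (htopo : ∀ e ∈ E, e.1 < e.2)
    (hwb : matVecH Z wb = matVecH (gdrMatrix E E') (fun _ => xb) + σ • b)
    (hmono : ∀ k i, 0 ≤ ⟪a (k + 1) i - b i, x (k + 1) i - xb⟫_ℝ) (hσ : 0 < σ) {ε : ℝ}
    (hε : 0 < ε) (hθ : ∀ k, θ k ∈ Set.Icc ε (2 - ε)) :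
    (∀ m, Tendsto (fun k => matVecH Zᵀ (x (k + 1)) m) atTop (𝓝 0)) ∧
      Tendsto (fun k => ∑ i, ⟪a (k + 1) i - b i, x (k + 1) i - xb⟫_ℝ) atTop (𝓝 0) ∧
      ∀ m, (fun k => w k m - wb m) =O[⊤] (fun _ => (1 : ℝ)) := by
  obtain ⟨hQ, hD, hs⟩ := tendsto_zero_of_fejer (pow_pos hε 2) (by positivity)
    (s := fun k => ∑ m, ‖w k m - wb m‖ ^ 2) (u := fun k => ∑ m, ‖matVecH Zᵀ (x (k + 1)) m‖ ^ 2)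
    (v := fun k => ∑ i, ⟪a (k + 1) i - b i, x (k + 1) i - xb⟫_ℝ)
    (fun _ => Finset.sum_nonneg fun _ _ => sq_nonneg _)
    (fun _ => Finset.sum_nonneg fun _ _ => sq_nonneg _)
    (fun k => Finset.sum_nonneg fun i _ => hmono k i)
    (fun k => hiter.fejer hZ htopo hwb (hmono k) hσ.le hε.le (hθ k))
  refine ⟨tendsto_zero_of_sum_norm_sq hQ, hD, fun m => isBigO_top.mpr ⟨√(∑ m, ‖w 0 m - wb m‖ ^ 2),
    fun k => ?_⟩⟩
  simpa using (norm_le_sqrt_sum_norm_sq (fun m => w k m - wb m) m).trans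
    (Real.sqrt_le_sqrt (hs (Nat.zero_le k)))

end IsGDR

theorem graphDRS_strong_convergence_general
    {H : Type*} [NormedAddCommGroup H] [InnerProductSpace ℝ H]
    (N : ℕ) (hN : 2 ≤ N) (E E' : Finset (Fin N × Fin N)) (hbi : IsBilevel E E')
    (Z : Matrix (Fin N) (Fin (N - 1)) ℝ) (hZ : ZOnto E' Z)
    (A : Fin N → H → Set H) (hA : ∀ i, IsMaxMonotone (A i))
    (hzer : SumZerNonempty A)
    (j : Fin N)
    (hunif : ∀ S : Set H, S ⊆ {z : H | (A j z).Nonempty} → Bornology.IsBounded S →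
      UnifMonoOn (A j) S)
    (σ : ℝ) (hσ : 0 < σ)
    (ε : ℝ) (hε0 : 0 < ε)
    (θ : ℕ → ℝ) (hθ : ∀ k, θ k ∈ Set.Icc ε (2 - ε))
    (x a : ℕ → Fin N → H) (w : ℕ → Fin (N - 1) → H)
    (hiter : IsGDR E E' Z A σ θ x a w) :
    ∃ xsol : H,
      (∃ b : Fin N → H, (∀ i, b i ∈ A i xsol) ∧ ∑ i, b i = 0) ∧
      ∀ i, Tendsto (fun k => x k i) atTop (𝓝 xsol) := by
  obtain ⟨xb, b, hb, hbsum⟩ := hzer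
  have hmono : ∀ k i, 0 ≤ ⟪a (k + 1) i - b i, x (k + 1) i - xb⟫_ℝ :=
    fun k i => (hA i).1 _ _ _ _ (hiter.mem k i) (hb i)
  obtain ⟨wb, hwb⟩ := exists_gdr_fixedPoint hZ hbi.topo σ xb hbsum
  obtain ⟨hq, hgap, hw⟩ := hiter.tendsto_zero_and_bounded hZ hbi.topo hwb hmono hσ hε0 hθ
  have hxj : Tendsto (fun k => x (k + 1) j) atTop (𝓝 xb) :=
    tendsto_of_unifMonoOn_bounded hunif (fun k => hiter.mem k j) (hb j)
      (hiter.x_isBigO_one hN hbi hwb hmono hσ.le hw j)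
      (squeeze_zero (fun k => hmono k j)
        (fun k => Finset.single_le_sum (fun i _ => hmono k i) (Finset.mem_univ j)) hgap)
  refine ⟨xb, ⟨b, hb, hbsum⟩, fun i => (tendsto_add_atTop_iff_nat 1).mp ?_⟩
  simpa using (hZ.tendsto_sub_of_tendsto_transpose hq i j).add hxj

/-- **Proposition 3.13.** If some `A_j` is uniformly monotone on every bounded
subset of its domain, then all sequences `x_i^k` of the graph-based Douglas–Rachford iteration
converge strongly to a solution of `0 ∈ (A_1 + ⋯ + A_N)x`. -/
theorem graphDRS_strong_convergence
    {H : Type*} [NormedAddCommGroup H] [InnerProductSpace ℝ H] [CompleteSpace H]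
    (N : ℕ) (hN : 2 ≤ N) (E E' : Finset (Fin N × Fin N)) (hbi : IsBilevel E E')
    (Z : Matrix (Fin N) (Fin (N - 1)) ℝ) (hZ : ZOnto E' Z)
    (A : Fin N → H → Set H) (hA : ∀ i, IsMaxMonotone (A i))
    (hzer : SumZerNonempty A)
    (j : Fin N)
    (hunif : ∀ S : Set H, S ⊆ {z : H | (A j z).Nonempty} → Bornology.IsBounded S →
      UnifMonoOn (A j) S)
    (σ : ℝ) (hσ : 0 < σ)
    (ε : ℝ) (hε0 : 0 < ε) (hε1 : ε < 1)
    (θ : ℕ → ℝ) (hθ : ∀ k, θ k ∈ Set.Icc ε (2 - ε))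
    (x a : ℕ → Fin N → H) (w : ℕ → Fin (N - 1) → H)
    (hiter : IsGDR E E' Z A σ θ x a w) :
    ∃ xsol : H,
      (∃ b : Fin N → H, (∀ i, b i ∈ A i xsol) ∧ ∑ i, b i = 0) ∧
      ∀ i, Tendsto (fun k => x k i) atTop (𝓝 xsol) :=
  graphDRS_strong_convergence_general N hN E E' hbi Z hZ A hA hzer j hunif σ hσ ε hε0 θ hθ x a w
    hiter
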